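/- arXiv:2106.13073 — 3 statements merged into one kernel-verified Lean document; each statement's English description precedes it below -/
import Mathlib

section
/- If X has the standard Cauchy distribution C(0,1), then for every real t, E[(it - 2X/(1+X^2)) * exp(itX)] = 0, where i is the imaginary unit. -/
/-!
The integrand is `g' / π` for `g x = exp(itx) / (1 + x²)`. Both `g` and `g'` are bounded
functions times `1 / (1 + x²)`, hence integrable, and the integral over `ℝ` of the derivative
of an integrable function with integrable derivative vanishes, since `g` tends to `0` at `±∞`.
-/

open MeasureTheory Real Complex

lemma one_add_ofReal_sq_ne_zero (x : ℝ) : 1 + (x : ℂ) ^ 2 ≠ 0 := by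
  exact_mod_cast (by positivity : (1 + x ^ 2 : ℝ) ≠ 0)

lemma norm_two_mul_div_one_add_sq_le_one (x : ℝ) : ‖2 * (x : ℂ) / (1 + (x : ℂ) ^ 2)‖ ≤ 1 := by
  have hpos : (0 : ℝ) < 1 + x ^ 2 := by positivity
  rw [show 2 * (x : ℂ) / (1 + (x : ℂ) ^ 2) = ((2 * x / (1 + x ^ 2) : ℝ) : ℂ) by push_cast; rfl,
    norm_real, norm_eq_abs, abs_le, le_div_iff₀ hpos, div_le_iff₀ hpos]
  constructor <;> nlinarith [sq_nonneg (x - 1), sq_nonneg (x + 1)]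

lemma integrable_div_one_add_sq {g : ℝ → ℂ} {C : ℝ} (hg : AEStronglyMeasurable g)
    (hC : ∀ x, ‖g x‖ ≤ C) : Integrable fun x : ℝ => g x / (1 + (x : ℂ) ^ 2) := by
  have h : Integrable fun x : ℝ => ((1 + x ^ 2)⁻¹ : ℝ) := integrable_inv_one_add_sq
  simpa [div_eq_mul_inv] using h.ofReal.bdd_mul hg (.of_forall hC)

lemma hasDerivAt_exp_mul_div_one_add_sq (c : ℂ) (x : ℝ) :
    HasDerivAt (fun y : ℝ => cexp (c * y) / (1 + (y : ℂ) ^ 2))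
      ((c - 2 * x / (1 + (x : ℂ) ^ 2)) * cexp (c * x) / (1 + (x : ℂ) ^ 2)) x := by
  have hexp := ((hasDerivAt_id (x : ℂ)).const_mul c).cexp
  have hden := (hasDerivAt_pow 2 (x : ℂ)).const_add 1
  refine (hexp.div hden (one_add_ofReal_sq_ne_zero x)).comp_ofReal.congr_deriv ?_
  simp only [id]
  field_simp [one_add_ofReal_sq_ne_zero x]
  ring

/-- If `X ~ C(0,1)` (standard Cauchy, density `1/(π(1+x²))`), then for every real `t`,
`E[(it - 2X/(1+X²)) exp(itX)] = 0`. -/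
theorem cauchy_char_necessity (t : ℝ) :
    ∫ x : ℝ, ((Complex.I * t - 2 * x / (1 + (x : ℂ) ^ 2)) * Complex.exp (Complex.I * t * x))
      * (1 / (π * (1 + (x : ℂ) ^ 2))) = 0 := by
  have hexp : Continuous fun x : ℝ => cexp (I * t * x) := by fun_prop
  have hcoef : Continuous fun x : ℝ => I * t - 2 * x / (1 + (x : ℂ) ^ 2) :=
    continuous_const.sub <| by fun_prop (disch := exact one_add_ofReal_sq_ne_zero)
  have hexp_norm (x : ℝ) : ‖cexp (I * t * x)‖ = 1 := by
    rw [mul_assoc, ← ofReal_mul]; exact norm_exp_I_mul_ofReal _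
  have hcoef_norm (x : ℝ) : ‖I * t - 2 * x / (1 + (x : ℂ) ^ 2)‖ ≤ |t| + 1 :=
    (norm_sub_le _ _).trans (by simpa using norm_two_mul_div_one_add_sq_le_one x)
  have hg := integrable_div_one_add_sq hexp.aestronglyMeasurable (fun x => (hexp_norm x).le)
  have hg' := integrable_div_one_add_sq (hcoef.mul hexp).aestronglyMeasurable fun x => by
    simpa only [Pi.mul_apply, norm_mul, hexp_norm, mul_one] using hcoef_norm x
  calc _ = (∫ x : ℝ, (I * t - 2 * x / (1 + (x : ℂ) ^ 2)) * cexp (I * t * x)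
          / (1 + (x : ℂ) ^ 2)) / (π : ℂ) := by
        rw [← integral_div]
        congr 1 with x
        field_simp
    _ = 0 := by
      rw [integral_eq_zero_of_hasDerivAt_of_integrable
        (fun x => hasDerivAt_exp_mul_div_one_add_sq (I * t) x) hg' hg, zero_div]
end

section
/- Fix real numbers y_1,…,y_n and define T_{n,a} as the double sum statistic with tuning parameter a > 0 (as in the Cauchy test with weight e^{−a|t|}). Then lim_{a→∞} a·T_{n,a} = 8 ( Σ_{j=1}^n y_j/(1+y_j^2) )^2 / n. -/
open Filter Set Finset

/-!
The limit is taken summand by summand: with `d = y_j - y_k`, `v = 1 / (d^2 + a^2) → 0`,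
`u = a^2 v → 1` and `w_j = y_j / (1 + y_j^2)`, the `(j, k)` summand of `a T_{n,a}` is
`8 w_j w_k u - c u v + 4 u^2 v - 12 d^2 u v^2` for a constant `c`, so it tends to `8 w_j w_k`,
and the double sum of these limits is `8 (Σ_j w_j)^2`.
-/

theorem tendsto_inv_sq_add_sq_atTop (d : ℝ) :
    Tendsto (fun a : ℝ => (d ^ 2 + a ^ 2)⁻¹) atTop (nhds 0) :=
  (tendsto_atTop_add_const_left _ _ (tendsto_pow_atTop two_ne_zero)).inv_tendsto_atTop

theorem tendsto_sq_div_sq_add_sq_atTop (d : ℝ) :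
    Tendsto (fun a : ℝ => a ^ 2 / (d ^ 2 + a ^ 2)) atTop (nhds 1) := by
  have h := (tendsto_inv_sq_add_sq_atTop d).const_mul (d ^ 2) |>.const_sub 1
  rw [mul_zero, sub_zero] at h
  refine h.congr' ?_
  filter_upwards [eventually_ne_atTop 0] with a ha
  field_simp
  ring

theorem tendsto_mul_cauchy_kernel_atTop (p q d : ℝ) :
    Tendsto (fun a : ℝ => a * (p * a / (d ^ 2 + a ^ 2) - q * a / (d ^ 2 + a ^ 2) ^ 2
      + (4 * a ^ 3 - 12 * a * d ^ 2) / (d ^ 2 + a ^ 2) ^ 3)) atTop (nhds p) := by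
  have hu := tendsto_sq_div_sq_add_sq_atTop d
  have hv := tendsto_inv_sq_add_sq_atTop d
  have h := ((hu.const_mul p).sub ((hu.const_mul q).mul hv)).add
    (((hu.pow 2).const_mul 4).mul hv |>.sub (((hu.const_mul (12 * d ^ 2)).mul hv).mul hv))
  simp only [mul_one, mul_zero, sub_zero, add_zero] at h
  exact h.congr fun a => by simp only [div_eq_mul_inv, ← inv_pow]; ring

theorem Tna_limit_infty_general (n : ℕ) (y : Fin n → ℝ) :
    Tendsto (fun a : ℝ =>
        a * ((1 / (n : ℝ)) * ∑ j, ∑ k,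
          (8 * a * y j * y k /
              ((1 + (y j) ^ 2) * (1 + (y k) ^ 2) * ((y j - y k) ^ 2 + a ^ 2))
            - 16 * a * y j * (y j - y k) /
              ((1 + (y j) ^ 2) * ((y j - y k) ^ 2 + a ^ 2) ^ 2)
            + (4 * a ^ 3 - 12 * a * (y j - y k) ^ 2) / ((y j - y k) ^ 2 + a ^ 2) ^ 3)))
      atTop
      (nhds (8 * (∑ j, y j / (1 + (y j) ^ 2)) ^ 2 / (n : ℝ))) := by
  set w : Fin n → ℝ := fun j => y j / (1 + y j ^ 2)
  have hlim : (1 / (n : ℝ)) * ∑ j, ∑ k, 8 * (w j * w k) = 8 * (∑ j, w j) ^ 2 / n := by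
    have hsq : ∑ j, ∑ k, 8 * (w j * w k) = 8 * (∑ j, w j) ^ 2 := by
      rw [sq, Finset.sum_mul_sum, Finset.mul_sum]
      simp only [Finset.mul_sum]
    rw [hsq]
    ring
  rw [← hlim]
  refine ((tendsto_finsetSum _ fun j _ => tendsto_finsetSum _ fun k _ =>
    tendsto_mul_cauchy_kernel_atTop (8 * (w j * w k))
      (16 * y j * (y j - y k) / (1 + y j ^ 2)) (y j - y k)).const_mul _).congr fun a => ?_
  simp only [Finset.mul_sum]
  refine Finset.sum_congr rfl fun j _ => Finset.sum_congr rfl fun k _ => ?_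
  simp only [w, div_eq_mul_inv, mul_inv, ← inv_pow]
  ring

/-- The statistic `T_{n,a}` satisfies
`lim_{a→∞} a T_{n,a} = (8/n) (Σⱼ yⱼ/(1+yⱼ²))²`. -/
theorem Tna_limit_infty (n : ℕ) (hn : 0 < n) (y : Fin n → ℝ) :
    Tendsto (fun a : ℝ =>
        a * ((1 / (n : ℝ)) * ∑ j, ∑ k,
          (8 * a * y j * y k /
              ((1 + (y j) ^ 2) * (1 + (y k) ^ 2) * ((y j - y k) ^ 2 + a ^ 2))
            - 16 * a * y j * (y j - y k) /
              ((1 + (y j) ^ 2) * ((y j - y k) ^ 2 + a ^ 2) ^ 2)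
            + (4 * a ^ 3 - 12 * a * (y j - y k) ^ 2) / ((y j - y k) ^ 2 + a ^ 2) ^ 3)))
      atTop
      (nhds (8 * (∑ j, y j / (1 + (y j) ^ 2)) ^ 2 / (n : ℝ))) :=
  Tna_limit_infty_general n y
end

section
/- For a > 0, ∫_{−∞}^∞ K_{ML}(t,t) e^{−a|t|} dt = (8a^4+80a^3+352a^2+320a+128)/(a^3(a+2)^5), where K_{ML}(t,t) = (1/2)(2t^2+1) − (1/2)(t^2+|t|+1)^2 e^{−2|t|} − (1/2)t^2(|t|+1)^2 e^{−2|t|}. -/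
open MeasureTheory Real Set

lemma intOnPow (n : ℕ) {b : ℝ} (hb : 0 < b) :
    IntegrableOn (fun x : ℝ => x ^ n * Real.exp (-(b * x))) (Ioi 0) := by
  have h := integrableOn_rpow_mul_exp_neg_mul_rpow (s := (n : ℝ)) (p := 1)
    (neg_one_lt_zero.trans_le (Nat.cast_nonneg n)) zero_lt_one hb
  refine h.congr_fun (fun x hx => ?_) measurableSet_Ioi
  beta_reduce
  rw [rpow_one, rpow_natCast, neg_mul]

lemma momPow (n : ℕ) {b : ℝ} (hb : 0 < b) :
    ∫ x in Ioi 0, x ^ n * Real.exp (-(b * x)) = (n.factorial : ℝ) / b ^ (n + 1) := by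
  have h := integral_rpow_mul_exp_neg_mul_Ioi (a := (n : ℝ) + 1) (by positivity) hb
  simp only [add_sub_cancel_right, rpow_natCast] at h
  rw [h, show ((n : ℝ) + 1) = ((n + 1 : ℕ) : ℝ) by push_cast; ring, rpow_natCast,
    div_pow, one_pow]
  push_cast
  rw [Real.Gamma_nat_eq_factorial]
  field_simp

/-- Closed form for `∫ K_ML(t,t) e^{-a|t|} dt` with the ML covariance kernel on the
diagonal `K_ML(t,t) = (1/2)(2t²+1) − (1/2)[(t²+|t|+1)² + t²(|t|+1)²] e^{-2|t|}`. -/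
theorem KML_weighted_integral (a : ℝ) (ha : 0 < a) :
    (∫ t : ℝ,
        ((1 / 2) * (2 * t ^ 2 + 1)
          - (1 / 2) * (t ^ 2 + |t| + 1) ^ 2 * Real.exp (-2 * |t|)
          - (1 / 2) * t ^ 2 * (|t| + 1) ^ 2 * Real.exp (-2 * |t|)) * Real.exp (-a * |t|))
      = (8 * a ^ 4 + 80 * a ^ 3 + 352 * a ^ 2 + 320 * a + 128) / (a ^ 3 * (a + 2) ^ 5) := by
  have hc : (0 : ℝ) < a + 2 := by linarith
  have key : (∫ t : ℝ,
        ((1 / 2) * (2 * t ^ 2 + 1)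
          - (1 / 2) * (t ^ 2 + |t| + 1) ^ 2 * Real.exp (-2 * |t|)
          - (1 / 2) * t ^ 2 * (|t| + 1) ^ 2 * Real.exp (-2 * |t|)) * Real.exp (-a * |t|))
      = ∫ t : ℝ, (fun x : ℝ =>
          x ^ 2 * Real.exp (-(a * x)) + (1/2) * (x ^ 0 * Real.exp (-(a * x)))
          - (x ^ 4 * Real.exp (-((a+2) * x)) + 2 * (x ^ 3 * Real.exp (-((a+2) * x)))
            + 2 * (x ^ 2 * Real.exp (-((a+2) * x))) + x ^ 1 * Real.exp (-((a+2) * x))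
            + (1/2) * (x ^ 0 * Real.exp (-((a+2) * x))))) |t| := by
    congr 1
    funext t
    have he : Real.exp (-2 * |t|) * Real.exp (-a * |t|) = Real.exp (-((a+2) * |t|)) := by
      rw [← Real.exp_add]; ring_nf
    simp only [pow_zero, one_mul, pow_one]
    rw [show (-(a * |t|)) = (-a * |t|) by ring, ← he, ← sq_abs t]
    ring
  rw [key, integral_comp_abs (f := fun x : ℝ =>
          x ^ 2 * Real.exp (-(a * x)) + (1/2) * (x ^ 0 * Real.exp (-(a * x)))
          - (x ^ 4 * Real.exp (-((a+2) * x)) + 2 * (x ^ 3 * Real.exp (-((a+2) * x)))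
            + 2 * (x ^ 2 * Real.exp (-((a+2) * x))) + x ^ 1 * Real.exp (-((a+2) * x))
            + (1/2) * (x ^ 0 * Real.exp (-((a+2) * x)))))]

  have I0a := intOnPow 0 ha
  have I2a := intOnPow 2 ha
  have I0c := intOnPow 0 hc
  have I1c := intOnPow 1 hc
  have I2c := intOnPow 2 hc
  have I3c := intOnPow 3 hc
  have I4c := intOnPow 4 hc
  have HA : IntegrableOn (fun x : ℝ => x ^ 2 * Real.exp (-(a * x))
      + (1/2) * (x ^ 0 * Real.exp (-(a * x)))) (Ioi 0) := I2a.add (I0a.const_mul (1/2))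
  have HB1 : IntegrableOn (fun x : ℝ => x ^ 4 * Real.exp (-((a+2) * x))
      + 2 * (x ^ 3 * Real.exp (-((a+2) * x)))) (Ioi 0) := I4c.add (I3c.const_mul 2)
  have HB2 : IntegrableOn (fun x : ℝ => x ^ 4 * Real.exp (-((a+2) * x))
      + 2 * (x ^ 3 * Real.exp (-((a+2) * x))) + 2 * (x ^ 2 * Real.exp (-((a+2) * x))))
      (Ioi 0) := HB1.add (I2c.const_mul 2)
  have HB3 : IntegrableOn (fun x : ℝ => x ^ 4 * Real.exp (-((a+2) * x))
      + 2 * (x ^ 3 * Real.exp (-((a+2) * x))) + 2 * (x ^ 2 * Real.exp (-((a+2) * x)))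
      + x ^ 1 * Real.exp (-((a+2) * x))) (Ioi 0) := HB2.add I1c
  have HB : IntegrableOn (fun x : ℝ => x ^ 4 * Real.exp (-((a+2) * x))
      + 2 * (x ^ 3 * Real.exp (-((a+2) * x))) + 2 * (x ^ 2 * Real.exp (-((a+2) * x)))
      + x ^ 1 * Real.exp (-((a+2) * x)) + (1/2) * (x ^ 0 * Real.exp (-((a+2) * x))))
      (Ioi 0) := HB3.add (I0c.const_mul (1/2))
  rw [integral_sub HA HB,
    integral_add I2a (I0a.const_mul (1/2)),
    integral_add HB3 (I0c.const_mul (1/2)),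
    integral_add HB2 I1c,
    integral_add HB1 (I2c.const_mul 2),
    integral_add I4c (I3c.const_mul 2),
    integral_const_mul, integral_const_mul, integral_const_mul, integral_const_mul,
    momPow 0 ha, momPow 2 ha, momPow 0 hc, momPow 1 hc, momPow 2 hc, momPow 3 hc, momPow 4 hc]
  simp only [Nat.factorial]
  push_cast
  field_simp
  ring
end
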